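/- arXiv:1710.06115 — 2 statements merged into one kernel-verified Lean document; each statement's English description precedes it below -/
import Mathlib

section
/- Let x ≤ w in S_n with x(i) < x(j) for i < j, and let t = t_{i,j}. Then x < x·t ≤ w if and only if rk_x(p) > rk_w(p) for every point p in the half-open rectangle [(i, x(i)), (j, x(j))) = {(a,b) : i ≤ a < j, x(i) ≤ b < x(j)}. -/
open Equiv

/-- Rank function: `rk w i j = #{u = 1,...,i : w(u) ≤ j}` (1-based via `Fin`). -/
def rk {n : ℕ} (w : Equiv.Perm (Fin n)) (i j : ℕ) : ℕ :=
  (Finset.univ.filter (fun u : Fin n => u.val + 1 ≤ i ∧ (w u).val + 1 ≤ j)).card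

/-- Coxeter length = number of inversions. -/
def len {n : ℕ} (w : Equiv.Perm (Fin n)) : ℕ :=
  (Finset.univ.filter (fun p : Fin n × Fin n => p.1 < p.2 ∧ w p.2 < w p.1)).card

/-- A transposition. -/
def IsTransposition {n : ℕ} (t : Equiv.Perm (Fin n)) : Prop :=
  ∃ i j : Fin n, i ≠ j ∧ t = Equiv.swap i j

/-- Bruhat order: generated by `x → x·t` for transpositions `t` increasing the length. -/
def bruhatLE {n : ℕ} : Equiv.Perm (Fin n) → Equiv.Perm (Fin n) → Prop :=
  Relation.ReflTransGen (fun x y => ∃ t, IsTransposition t ∧ y = x * t ∧ len x < len y)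

/-- Strict Bruhat order. -/
def bruhatLT {n : ℕ} (x y : Equiv.Perm (Fin n)) : Prop := bruhatLE x y ∧ x ≠ y

/-- Difference function `d_w(p,p')`. -/
def dOf {n : ℕ} (w : Equiv.Perm (Fin n)) (p q : ℕ × ℕ) : ℤ :=
  (rk w p.1 p.2 : ℤ) + rk w q.1 q.2 - rk w p.1 q.2 - rk w q.1 p.2

/-- Strictly comparable points: `(i'−i)(j'−j) > 0`. -/
def SCmp (p q : ℕ × ℕ) : Prop := (p.1 < q.1 ∧ p.2 < q.2) ∨ (q.1 < p.1 ∧ q.2 < p.2)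

/-- Corners of the rectangle spanned by `p`, `q`. -/
def corners (p q : ℕ × ℕ) : Set (ℕ × ℕ) := {(p.1, q.2), (q.1, p.2)}

/-!
Both sides are governed by the tableau criterion: `x ≤ w` in Bruhat order iff `rk w ≤ rk x`
pointwise. Since `x(i) < x(j)`, passing from `x` to `x·t` lowers `rk` by exactly one on the
rectangle `[(i, x(i)), (j, x(j)))` and leaves it unchanged elsewhere, so `x·t ≤ w` says precisely
that `rk w < rk x` on that rectangle; and `x < x·t` always holds since `x·t` has more
inversions than `x`.

For the criterion, a Bruhat step `y → y·t` lowers `rk`, which gives one direction. Conversely, if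
`rk w ≤ rk x` and `x ≠ w`, let `i` be the first position where `x` and `w` differ; then
`x(i) < w(i)`, and the first `j > i` with `x(i) < x(j) ≤ w(i)` gives a rectangle on which
`rk w < rk x`, so `x < x·t_{i,j}` and `rk w ≤ rk (x·t_{i,j})`; induct on `∑ rk x`.
-/

section

variable {n : ℕ}

def inversions (y : Perm (Fin n)) : Finset (Fin n × Fin n) :=
  Finset.univ.filter fun p => p.1 < p.2 ∧ y p.2 < y p.1

theorem mem_inversions {y : Perm (Fin n)} {p : Fin n × Fin n} :
    p ∈ inversions y ↔ p.1 < p.2 ∧ y p.2 < y p.1 := by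
  simp [inversions]

theorem len_eq_card_inversions (y : Perm (Fin n)) : len y = (inversions y).card := rfl

theorem len_lt_len_mul_swap (x : Perm (Fin n)) {i j : Fin n} (hij : i < j) (hx : x i < x j) :
    len x < len (x * swap i j) := by
  -- An inversion `p` of `x` is moved by `t = swap i j` when `t` keeps it increasing; otherwise
  -- `p` is `(i, k)` with `x k < x i` or `(k, j)` with `x j < x k` (`i < k < j`), and is still an
  -- inversion of `x * t`. The image misses the new inversion `(i, j)`.
  let ψ : Fin n × Fin n → Fin n × Fin n := fun p =>
    if swap i j p.1 < swap i j p.2 then (swap i j p.1, swap i j p.2) else p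
  have hmaps : (inversions x).image ψ ⊆ inversions (x * swap i j) := by
    simp only [ψ, Finset.subset_iff, Finset.mem_image, mem_inversions, Perm.mul_apply]
    grind
  have hinj : Set.InjOn ψ (inversions x) := by
    simp only [Set.InjOn, ψ, Finset.mem_coe, mem_inversions]
    grind
  have hmiss : (i, j) ∉ (inversions x).image ψ := by
    simp only [ψ, Finset.mem_image, mem_inversions]
    grind
  have hnew : (i, j) ∈ inversions (x * swap i j) := by
    simpa [mem_inversions] using ⟨hij, hx⟩
  rw [len_eq_card_inversions, len_eq_card_inversions, ← Finset.card_image_of_injOn hinj]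
  exact Finset.card_lt_card ((Finset.ssubset_iff_of_subset hmaps).2 ⟨_, hnew, hmiss⟩)

theorem lt_of_len_lt_len_mul_swap {x : Perm (Fin n)} {i j : Fin n} (hij : i < j)
    (hlen : len x < len (x * swap i j)) : x i < x j := by
  by_contra! h
  have hlt : (x * swap i j) i < (x * swap i j) j := by
    simpa using lt_of_le_of_ne h (x.injective.ne hij.ne')
  have := len_lt_len_mul_swap (x * swap i j) hij hlt
  rw [mul_swap_mul_self] at this
  omega

theorem bruhatLT_mul_swap {x : Perm (Fin n)} {i j : Fin n} (hij : i < j) (hx : x i < x j) :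
    bruhatLT x (x * swap i j) := by
  have hlen := len_lt_len_mul_swap x hij hx
  exact ⟨.single ⟨swap i j, ⟨i, j, hij.ne, rfl⟩, rfl, hlen⟩, fun h => hlen.ne (congrArg len h)⟩

theorem rk_eq_sum (w : Perm (Fin n)) (a b : ℕ) :
    rk w a b = ∑ u, if u.val < a ∧ (w u).val < b then 1 else 0 := by
  simp only [rk, Finset.card_filter, Nat.add_one_le_iff]

theorem rk_eq_rk_mul_swap_add (x : Perm (Fin n)) {i j : Fin n} (hij : i < j) (hx : x i < x j)
    (a b : ℕ) :
    rk x a b = rk (x * swap i j) a b +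
      if i.val < a ∧ a ≤ j.val ∧ (x i).val < b ∧ b ≤ (x j).val then 1 else 0 := by
  simp only [rk_eq_sum, ← Finset.sum_add_sum_compl {i, j}, Finset.sum_pair hij.ne]
  have hrest : ∑ u ∈ {i, j}ᶜ, (if u.val < a ∧ ((x * swap i j) u).val < b then 1 else 0) =
      ∑ u ∈ {i, j}ᶜ, if u.val < a ∧ (x u).val < b then 1 else 0 := by
    refine Finset.sum_congr rfl fun u hu => ?_
    simp only [Finset.mem_compl, Finset.mem_insert, Finset.mem_singleton, not_or] at hu
    rw [Perm.mul_apply, swap_apply_of_ne_of_ne hu.1 hu.2]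
  rw [hrest]
  simp only [Perm.mul_apply, swap_apply_left, swap_apply_right]
  split_ifs <;> omega

theorem rk_mul_swap_le (x : Perm (Fin n)) {i j : Fin n} (hij : i < j) (hx : x i < x j)
    (a b : ℕ) : rk (x * swap i j) a b ≤ rk x a b := by
  rw [rk_eq_rk_mul_swap_add x hij hx a b]
  exact Nat.le_add_right _ _

theorem rk_le_rk_mul_swap_iff {x w : Perm (Fin n)} (hle : ∀ a b, rk w a b ≤ rk x a b)
    {i j : Fin n} (hij : i < j) (hx : x i < x j) :
    (∀ a b, rk w a b ≤ rk (x * swap i j) a b) ↔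
      ∀ a b, i.val < a → a ≤ j.val → (x i).val < b → b ≤ (x j).val → rk w a b < rk x a b := by
  constructor
  · intro h a b hia haj hib hbj
    have := rk_eq_rk_mul_swap_add x hij hx a b
    rw [if_pos ⟨hia, haj, hib, hbj⟩] at this
    have := h a b
    omega
  · intro h a b
    have := rk_eq_rk_mul_swap_add x hij hx a b
    split_ifs at this with hrect
    · have := h a b hrect.1 hrect.2.1 hrect.2.2.1 hrect.2.2.2
      omega
    · have := hle a b
      omega

theorem rk_mul_swap_le_of_len_lt {x : Perm (Fin n)} {i j : Fin n}
    (hlen : len x < len (x * swap i j)) (a b : ℕ) : rk (x * swap i j) a b ≤ rk x a b := by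
  rcases lt_trichotomy i j with hij | rfl | hji
  · exact rk_mul_swap_le x hij (lt_of_len_lt_len_mul_swap hij hlen) a b
  · rw [swap_self]
    exact le_rfl
  · rw [swap_comm] at hlen ⊢
    exact rk_mul_swap_le x hji (lt_of_len_lt_len_mul_swap hji hlen) a b

theorem rk_le_of_bruhatLE {x w : Perm (Fin n)} (h : bruhatLE x w) (a b : ℕ) :
    rk w a b ≤ rk x a b := by
  induction h with
  | refl => exact le_rfl
  | tail _ hstep ih =>
    obtain ⟨_, ⟨i, j, -, rfl⟩, rfl, hlen⟩ := hstep
    exact (rk_mul_swap_le_of_len_lt hlen a b).trans ih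

theorem rk_succ (w : Perm (Fin n)) (u : Fin n) (b : ℕ) :
    rk w (u.val + 1) b = rk w u.val b + if (w u).val < b then 1 else 0 := by
  have hterm : ∀ v : Fin n, (if v.val < u.val + 1 ∧ (w v).val < b then 1 else 0) =
      (if v.val < u.val ∧ (w v).val < b then 1 else 0) +
        if v = u then (if (w u).val < b then 1 else 0) else 0 := by
    intro v
    rcases lt_trichotomy v u with h | rfl | h <;> grind
  simp only [rk_eq_sum, hterm, Finset.sum_add_distrib, Fintype.sum_ite_eq']

theorem rk_congr {x w : Perm (Fin n)} {a : ℕ} (h : ∀ u : Fin n, u.val < a → x u = w u) (b : ℕ) :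
    rk x a b = rk w a b := by
  simp only [rk_eq_sum]
  refine Finset.sum_congr rfl fun u _ => ?_
  by_cases hu : u.val < a
  · rw [h u hu]
  · simp [hu]

theorem exists_agree_lt_of_rk_le {x w : Perm (Fin n)} (hle : ∀ a b, rk w a b ≤ rk x a b)
    (hne : x ≠ w) : ∃ i, (∀ u < i, x u = w u) ∧ x i < w i := by
  obtain ⟨i, hi, hmin⟩ := wellFounded_lt.has_min {u | x u ≠ w u}
    (by simpa [Set.Nonempty, Equiv.ext_iff] using hne)
  have hagree : ∀ u < i, x u = w u := fun u hu => by_contra fun h => hmin u h hu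
  refine ⟨i, hagree, lt_of_le_of_ne ?_ hi⟩
  have h := hle (i.val + 1) ((w i).val + 1)
  rw [rk_succ, rk_succ, rk_congr (fun u hu => hagree u hu)] at h
  simp only [lt_add_one, if_true] at h
  split_ifs at h with hxi
  · exact Fin.le_def.2 (by omega)
  · omega

theorem exists_minimal_swap {x w : Perm (Fin n)} {i : Fin n} (hagree : ∀ u < i, x u = w u)
    (hi : x i < w i) : ∃ j, i < j ∧ x i < x j ∧ x j ≤ w i ∧
      ∀ u, i < u → u < j → x u < x i ∨ w i < x u := by
  have hk : i < x.symm (w i) := by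
    by_contra! h
    rcases h.lt_or_eq with h | h
    · have := hagree _ h
      rw [apply_symm_apply] at this
      exact h.ne (w.injective this.symm)
    · exact hi.ne (by simpa using (congrArg x h).symm)
  obtain ⟨j, ⟨hij, hxj, hjw⟩, hmin⟩ := wellFounded_lt.has_min
    {k | i < k ∧ x i < x k ∧ x k ≤ w i} ⟨x.symm (w i), hk, by simpa using hi, by simp⟩
  refine ⟨j, hij, hxj, hjw, fun u hiu huj => ?_⟩
  have hu : ¬(x i < x u ∧ x u ≤ w i) := fun h => hmin u ⟨hiu, h⟩ huj
  have hne : x u ≠ x i := x.injective.ne hiu.ne'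
  grind

theorem rk_lt_rk_of_minimal_swap {x w : Perm (Fin n)} (hle : ∀ a b, rk w a b ≤ rk x a b)
    {i j : Fin n} (hagree : ∀ u < i, x u = w u) (hjw : x j ≤ w i)
    (hmin : ∀ u, i < u → u < j → x u < x i ∨ w i < x u)
    (a b : ℕ) (hia : i.val < a) (haj : a ≤ j.val) (hib : (x i).val < b) (hbj : b ≤ (x j).val) :
    rk w a b < rk x a b := by
  -- Compare with the point `(a, c)` in the same row: termwise, the strip `b ≤ value < c` of the
  -- first `a` positions holds at least one more value of `w` (namely `w i`) than of `x`.
  set c := (w i).val + 1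
  have hterm : ∀ u : Fin n,
      (if u.val < a ∧ (w u).val < b then 1 else 0) + (if u.val < a ∧ (x u).val < c then 1 else 0) +
        (if u = i then 1 else 0) ≤
      (if u.val < a ∧ (x u).val < b then 1 else 0) + (if u.val < a ∧ (w u).val < c then 1 else 0) := by
    intro u
    rcases lt_trichotomy u i with hu | rfl | hu
    · rw [hagree u hu]
      grind
    · grind
    · by_cases hua : u.val < a
      · have := hmin u hu (Fin.lt_def.2 (by omega))
        grind
      · grind
  have hsum := Finset.sum_le_sum fun u (_ : u ∈ Finset.univ) => hterm u
  simp only [Finset.sum_add_distrib, ← rk_eq_sum, Finset.sum_ite_eq', Finset.mem_univ,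
    if_true] at hsum
  have := hle a c
  omega

theorem exists_swap_rk_lt_of_rk_le {x w : Perm (Fin n)} (hle : ∀ a b, rk w a b ≤ rk x a b)
    (hne : x ≠ w) : ∃ i j : Fin n, i < j ∧ x i < x j ∧
      ∀ a b, i.val < a → a ≤ j.val → (x i).val < b → b ≤ (x j).val → rk w a b < rk x a b := by
  obtain ⟨i, hagree, hi⟩ := exists_agree_lt_of_rk_le hle hne
  obtain ⟨j, hij, hxj, hjw, hmin⟩ := exists_minimal_swap hagree hi
  exact ⟨i, j, hij, hxj, rk_lt_rk_of_minimal_swap hle hagree hjw hmin⟩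

def rkSum (x : Perm (Fin n)) : ℕ :=
  ∑ p ∈ Finset.range (n + 1) ×ˢ Finset.range (n + 1), rk x p.1 p.2

theorem rkSum_mul_swap_lt (x : Perm (Fin n)) {i j : Fin n} (hij : i < j) (hx : x i < x j) :
    rkSum (x * swap i j) < rkSum x := by
  refine Finset.sum_lt_sum (fun p _ => rk_mul_swap_le x hij hx p.1 p.2)
    ⟨(i.val + 1, (x i).val + 1), ?_, ?_⟩
  · simp only [Finset.mem_product, Finset.mem_range]
    omega
  · have := rk_eq_rk_mul_swap_add x hij hx (i.val + 1) ((x i).val + 1)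
    rw [if_pos (by omega)] at this
    dsimp only
    omega

theorem bruhatLE_of_rk_le {x w : Perm (Fin n)} (hle : ∀ a b, rk w a b ≤ rk x a b) :
    bruhatLE x w := by
  by_cases hxw : x = w
  · exact hxw ▸ .refl
  obtain ⟨i, j, hij, hx, hrect⟩ := exists_swap_rk_lt_of_rk_le hle hxw
  exact .head ⟨swap i j, ⟨i, j, hij.ne, rfl⟩, rfl, len_lt_len_mul_swap x hij hx⟩
    (bruhatLE_of_rk_le ((rk_le_rk_mul_swap_iff hle hij hx).2 hrect))
termination_by rkSum x
decreasing_by exact rkSum_mul_swap_lt x hij hx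

theorem bruhatLE_iff_rk_le {x w : Perm (Fin n)} :
    bruhatLE x w ↔ ∀ a b, rk w a b ≤ rk x a b :=
  ⟨rk_le_of_bruhatLE, bruhatLE_of_rk_le⟩

end

theorem stmt5 (n : ℕ) (x w : Equiv.Perm (Fin n)) (hxw : bruhatLE x w)
    (i j : Fin n) (hij : i < j) (hx : x i < x j) :
    (bruhatLT x (x * Equiv.swap i j) ∧ bruhatLE (x * Equiv.swap i j) w) ↔
      ∀ a b : ℕ, i.val + 1 ≤ a → a < j.val + 1 → (x i).val + 1 ≤ b → b < (x j).val + 1 →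
        rk w a b < rk x a b := by
  rw [and_iff_right (bruhatLT_mul_swap hij hx), bruhatLE_iff_rk_le,
    rk_le_rk_mul_swap_iff (bruhatLE_iff_rk_le.1 hxw) hij hx]
  simp only [Nat.add_one_le_iff, Nat.lt_add_one_iff]
end

section
/- Call a pair x ≤ w in S_n 'influential' if infl^w(X) = {0,...,n}², where X = {p : rk_x(p) = rk_w(p)}. Every influential pair is tight, i.e., for every y ∈ S_n with rk_y = rk_w on X one has y ≤ w. -/
open Equiv

/-- One step of the influence construction. -/
def cOp {n : ℕ} (w : Equiv.Perm (Fin n)) (A B : Set (ℕ × ℕ)) : Set (ℕ × ℕ) :=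
  B ∪ {p | ∃ p' ∈ A, SCmp p p' ∧ dOf w p p' = 0 ∧ corners p p' ⊆ B}

/-- The influence set of `A`. -/
def infl {n : ℕ} (w : Equiv.Perm (Fin n)) (A : Set (ℕ × ℕ)) : Set (ℕ × ℕ) :=
  ⋃ k : ℕ, (cOp w A)^[k] A

/-!
Rank functions are submodular, so `d_y(p, p') ≥ 0` for strictly comparable `p, p'`. Hence if
`rk_y ≥ rk_w` at the two corners, `rk_y = rk_w` at `p'` and `d_w(p, p') = 0`, then
`rk_y ≥ rk_w` at `p`: the inequality `rk_y ≥ rk_w` spreads from the points where `rk_y = rk_w`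
to their whole influence set. For an influential pair this set is the whole grid, and the tableau
criterion turns `rk_y ≥ rk_w` into `y ≤ w`: while `y ≠ w`, take `k` the first position where
`y` and `w` differ and `l > k` the first position with `y k < y l ≤ w k`; then `rk_y > rk_w`
on the rectangle `(k, l] × (y k, y l]`, so `y ↦ y · (k l)`, which lowers `rk_y` by one exactly
there and increases the length, keeps `rk_y ≥ rk_w`.
-/

open Finset

lemma rk_add_rk_le_rk_add_rk {n : ℕ} (z : Perm (Fin n)) {i i' j j' : ℕ} (hi : i ≤ i')
    (hj : j ≤ j') : rk z i j' + rk z i' j ≤ rk z i j + rk z i' j' := by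
  unfold rk
  rw [← card_union_add_card_inter, add_comm (card _)]
  gcongr <;> intro u <;> simp only [mem_union, mem_inter, mem_filter, mem_univ, true_and] <;> omega

lemma dOf_nonneg {n : ℕ} (z : Perm (Fin n)) {p q : ℕ × ℕ} (h : SCmp p q) :
    0 ≤ dOf z p q := by
  unfold dOf
  rcases h with ⟨h1, h2⟩ | ⟨h1, h2⟩
  · have := rk_add_rk_le_rk_add_rk z h1.le h2.le
    omega
  · have := rk_add_rk_le_rk_add_rk z h1.le h2.le
    omega

lemma cOp_subset_rk_le {n : ℕ} {w y : Perm (Fin n)} {A B : Set (ℕ × ℕ)}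
    (hA : ∀ p ∈ A, rk y p.1 p.2 = rk w p.1 p.2)
    (hB : B ⊆ {p | rk w p.1 p.2 ≤ rk y p.1 p.2}) :
    cOp w A B ⊆ {p | rk w p.1 p.2 ≤ rk y p.1 p.2} := by
  rintro p (hp | ⟨q, hq, hpq, hd, hc⟩)
  · exact hB hp
  have h1 : rk w p.1 q.2 ≤ rk y p.1 q.2 := hB (hc (Set.mem_insert _ _))
  have h2 : rk w q.1 p.2 ≤ rk y q.1 p.2 := hB (hc (Set.mem_insert_of_mem _ rfl))
  have hy := dOf_nonneg y hpq
  have hq' := hA q hq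
  simp only [dOf, Set.mem_ofPred_eq] at hd hy ⊢
  omega

lemma infl_subset_rk_le {n : ℕ} {w y : Perm (Fin n)} {A : Set (ℕ × ℕ)}
    (hA : ∀ p ∈ A, rk y p.1 p.2 = rk w p.1 p.2) :
    infl w A ⊆ {p | rk w p.1 p.2 ≤ rk y p.1 p.2} := by
  refine Set.iUnion_subset fun k => ?_
  induction k with
  | zero => exact fun p hp => (hA p hp).ge
  | succ k ih =>
    rw [Function.iterate_succ_apply']
    exact cOp_subset_rk_le hA ih

lemma rk_mul_swap_add {n : ℕ} (y : Perm (Fin n)) {k l : Fin n} (hkl : k < l) (i j : ℕ) :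
    rk (y * swap k l) i j +
        (if k.val < i ∧ i ≤ l.val ∧ (y k).val < j ∧ j ≤ (y l).val then 1 else 0) =
      rk y i j +
        (if k.val < i ∧ i ≤ l.val ∧ (y l).val < j ∧ j ≤ (y k).val then 1 else 0) := by
  have hl : l ∈ univ.erase k := mem_erase.mpr ⟨hkl.ne', mem_univ l⟩
  simp only [rk, card_filter]
  rw [← Equiv.sum_comp (swap k l)]
  simp only [Perm.mul_apply, swap_apply_self]
  rw [← add_sum_erase _ _ (mem_univ k), ← add_sum_erase _ _ hl,
    ← add_sum_erase _ _ (mem_univ k), ← add_sum_erase _ _ hl,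
    swap_apply_left, swap_apply_right, sum_congr rfl fun u hu => by
      rw [swap_apply_of_ne_of_ne (mem_erase.mp (mem_of_mem_erase hu)).1 (mem_erase.mp hu).1]]
  split_ifs <;> omega

lemma sum_rk_mul_swap_lt {n : ℕ} (y : Perm (Fin n)) {k l : Fin n} (hkl : k < l) (hy : y k < y l) :
    ∑ p ∈ range (n + 1) ×ˢ range (n + 1), rk (y * swap k l) p.1 p.2 <
      ∑ p ∈ range (n + 1) ×ˢ range (n + 1), rk y p.1 p.2 := by
  have hkl' : k.val < l.val := hkl
  have hy' : (y k).val < (y l).val := hy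
  refine sum_lt_sum (fun p _ => ?_) ⟨(k.val + 1, (y k).val + 1), ?_, ?_⟩
  · have := rk_mul_swap_add y hkl p.1 p.2
    split_ifs at this <;> omega
  · simp only [mem_product, mem_range]
    omega
  · have := rk_mul_swap_add y hkl (k.val + 1) ((y k).val + 1)
    dsimp only
    split_ifs at this <;> omega

lemma len_lt_len_mul_swap_s13 {n : ℕ} (y : Perm (Fin n)) {k l : Fin n} (hkl : k < l)
    (hy : y k < y l) : len y < len (y * swap k l) := by
  let G : Fin n × Fin n → Fin n × Fin n := fun p =>
    (if l < p.2 then swap k l p.1 else p.1, if p.1 < k then swap k l p.2 else p.2)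
  have hG : Function.Involutive G := by
    intro p
    simp only [G, swap_apply_def]
    grind
  have hmaps : ∀ p : Fin n × Fin n, p.1 < p.2 ∧ y p.2 < y p.1 →
      G p ≠ (k, l) ∧ (G p).1 < (G p).2 ∧ (y * swap k l) (G p).2 < (y * swap k l) (G p).1 := by
    rintro ⟨a, b⟩ hab
    simp only [G, Perm.mul_apply, swap_apply_def]
    grind
  have hkl_mem : (k, l) ∈ univ.filter
      (fun p : Fin n × Fin n => p.1 < p.2 ∧ (y * swap k l) p.2 < (y * swap k l) p.1) :=
    mem_filter.mpr ⟨mem_univ _, hkl, by simpa [Perm.mul_apply] using hy⟩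
  calc len y = (image G (univ.filter fun p : Fin n × Fin n => p.1 < p.2 ∧ y p.2 < y p.1)).card :=
        (card_image_of_injective _ hG.injective).symm
    _ ≤ ((univ.filter fun p : Fin n × Fin n =>
          p.1 < p.2 ∧ (y * swap k l) p.2 < (y * swap k l) p.1).erase (k, l)).card := by
        refine card_le_card fun q hq => ?_
        obtain ⟨p, hp, rfl⟩ := mem_image.mp hq
        obtain ⟨hne, hinv⟩ := hmaps p (mem_filter.mp hp).2
        exact mem_erase.mpr ⟨hne, mem_filter.mpr ⟨mem_univ _, hinv⟩⟩
    _ < len (y * swap k l) := card_erase_lt_of_mem hkl_mem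

lemma rk_lt_rk_of_mem_rect {n : ℕ} {y w : Perm (Fin n)}
    (h : ∀ i ≤ n, ∀ j ≤ n, rk w i j ≤ rk y i j) {k l : Fin n}
    (hagree : ∀ u < k, y u = w u) (hgap : ∀ u, k < u → u < l → y k < y u → w k < y u)
    {i j : ℕ} (hki : k.val < i) (hil : i ≤ l.val) (hkj : (y k).val < j)
    (hjw : j ≤ (w k).val) :
    rk w i j < rk y i j := by
  have hagree' : ∀ u : Fin n, u.val < k.val → (y u).val = (w u).val := fun u hu =>
    congrArg Fin.val (hagree u hu)
  have hgap' : ∀ u : Fin n, k.val < u.val → u.val < l.val → (y k).val < (y u).val →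
      (w k).val < (y u).val := hgap
  -- from height `w k + 1` down to `j`, `rk_w` drops by at least `#D + 1`, `rk_y` by at most `#D`
  set D := univ.filter fun u : Fin n =>
    u.val < k.val ∧ j ≤ (w u).val ∧ (w u).val ≤ (w k).val
  have hw : rk w i j + 1 + D.card ≤ rk w i ((w k).val + 1) := by
    unfold rk
    set A := univ.filter fun u : Fin n => u.val + 1 ≤ i ∧ (w u).val + 1 ≤ j
    have hAD : Disjoint A D := disjoint_filter.mpr fun u _ hu hu' => by omega
    have hk : k ∉ A ∪ D := by
      simp only [A, D, mem_union, mem_filter, mem_univ, true_and, lt_irrefl, false_and, or_false]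
      omega
    rw [add_right_comm, ← card_union_of_disjoint hAD, ← card_insert_of_notMem hk]
    refine card_le_card fun u hu => ?_
    simp only [A, D, mem_insert, mem_union, mem_filter, mem_univ, true_and] at hu ⊢
    rcases hu with rfl | hu | hu <;> omega
  have hy : rk y i ((w k).val + 1) ≤ rk y i j + D.card := by
    unfold rk
    refine (card_le_card fun u hu => ?_).trans (card_union_le _ _)
    simp only [D, mem_union, mem_filter, mem_univ, true_and] at hu ⊢
    rcases lt_trichotomy u.val k.val with hu' | hu' | hu'
    · have := hagree' u hu'
      omega
    · have : u = k := Fin.ext hu'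
      subst this
      omega
    · have := hgap' u hu' (by omega)
      omega
  have := h i (by omega) ((w k).val + 1) (by omega)
  omega

lemma exists_swap_rk_le {n : ℕ} {y w : Perm (Fin n)} (hyw : y ≠ w)
    (h : ∀ i ≤ n, ∀ j ≤ n, rk w i j ≤ rk y i j) :
    ∃ k l : Fin n, k < l ∧ y k < y l ∧
      ∀ i ≤ n, ∀ j ≤ n, rk w i j ≤ rk (y * swap k l) i j := by
  obtain ⟨k, hk, hkmin⟩ := wellFounded_lt.has_min {u | y u ≠ w u}
    (by simpa [Set.Nonempty, Perm.ext_iff] using hyw)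
  have hagree : ∀ u < k, y u = w u := fun u hu => not_not.mp fun h => hkmin u h hu
  have hyk : y k < w k := by
    refine (lt_or_gt_of_ne hk).resolve_right fun hwk => ?_
    have hsub : univ.filter (fun u : Fin n =>
          u.val + 1 ≤ k.val + 1 ∧ (y u).val + 1 ≤ (w k).val + 1)
        ⊆ (univ.filter fun u : Fin n =>
            u.val + 1 ≤ k.val + 1 ∧ (w u).val + 1 ≤ (w k).val + 1).erase k := by
      intro u hu
      simp only [mem_erase, mem_filter, mem_univ, true_and] at hu ⊢
      grind
    have := (card_le_card hsub).trans_lt (card_erase_lt_of_mem (by simp))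
    exact (h (k.val + 1) k.isLt ((w k).val + 1) (w k).isLt).not_gt this
  have hkm : k < y.symm (w k) := by
    rcases lt_trichotomy (y.symm (w k)) k with hlt | heq | hgt
    · have := hagree _ hlt
      simp only [apply_symm_apply] at this
      exact absurd (w.injective this) hlt.ne'
    · exact absurd (y.eq_symm_apply.mp heq.symm) hk
    · exact hgt
  obtain ⟨l, ⟨hkl, hykl, hylw⟩, hlmin⟩ := wellFounded_lt.has_min
    {u | k < u ∧ y k < y u ∧ y u ≤ w k} ⟨y.symm (w k), hkm, by simpa using hyk, by simp⟩
  have hgap : ∀ u, k < u → u < l → y k < y u → w k < y u := fun u hku hul hyu =>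
    not_le.mp fun hle => hlmin u ⟨hku, hyu, hle⟩ hul
  refine ⟨k, l, hkl, hykl, fun i hi j hj => ?_⟩
  have hswap := rk_mul_swap_add y hkl i j
  by_cases hrect : k.val < i ∧ i ≤ l.val ∧ (y k).val < j ∧ j ≤ (y l).val
  · have := rk_lt_rk_of_mem_rect h hagree hgap hrect.1 hrect.2.1 hrect.2.2.1
      (hrect.2.2.2.trans hylw)
    simp only [hrect, and_self, if_true] at hswap
    split_ifs at hswap <;> omega
  · have := h i hi j hj
    split_ifs at hswap <;> omega

theorem bruhatLE_of_rk_le_s13 {n : ℕ} {y w : Perm (Fin n)}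
    (h : ∀ i ≤ n, ∀ j ≤ n, rk w i j ≤ rk y i j) : bruhatLE y w := by
  induction hN : ∑ p ∈ range (n + 1) ×ˢ range (n + 1), rk y p.1 p.2
    using Nat.strong_induction_on generalizing y with
  | _ N ih =>
  by_cases hyw : y = w
  · exact hyw ▸ .refl
  obtain ⟨k, l, hkl, hy, h'⟩ := exists_swap_rk_le hyw h
  exact .head ⟨swap k l, ⟨k, l, hkl.ne, rfl⟩, rfl, len_lt_len_mul_swap_s13 y hkl hy⟩
    (ih _ (hN ▸ sum_rk_mul_swap_lt y hkl hy) h' rfl)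

theorem stmt13_general (n : ℕ) (x w : Equiv.Perm (Fin n))
    (hinf : infl w {p : ℕ × ℕ | p.1 ≤ n ∧ p.2 ≤ n ∧ rk x p.1 p.2 = rk w p.1 p.2} =
      {p : ℕ × ℕ | p.1 ≤ n ∧ p.2 ≤ n}) :
    ∀ y : Equiv.Perm (Fin n),
      (∀ p : ℕ × ℕ, p.1 ≤ n → p.2 ≤ n → rk x p.1 p.2 = rk w p.1 p.2 →
        rk y p.1 p.2 = rk w p.1 p.2) → bruhatLE y w := by
  intro y hy
  have hle := infl_subset_rk_le (y := y)
    (A := {p : ℕ × ℕ | p.1 ≤ n ∧ p.2 ≤ n ∧ rk x p.1 p.2 = rk w p.1 p.2})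
    fun p hp => hy p hp.1 hp.2.1 hp.2.2
  rw [hinf] at hle
  exact bruhatLE_of_rk_le_s13 fun i hi j hj => hle (show (i, j) ∈ _ from ⟨hi, hj⟩)

theorem stmt13 (n : ℕ) (x w : Equiv.Perm (Fin n)) (hxw : bruhatLE x w)
    (hinf : infl w {p : ℕ × ℕ | p.1 ≤ n ∧ p.2 ≤ n ∧ rk x p.1 p.2 = rk w p.1 p.2} =
      {p : ℕ × ℕ | p.1 ≤ n ∧ p.2 ≤ n}) :
    ∀ y : Equiv.Perm (Fin n),
      (∀ p : ℕ × ℕ, p.1 ≤ n → p.2 ≤ n → rk x p.1 p.2 = rk w p.1 p.2 →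
        rk y p.1 p.2 = rk w p.1 p.2) → bruhatLE y w :=
  stmt13_general n x w hinf
end
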